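/- For the 2k-regular ring lattice on n ≥ 2k+1 vertices (each vertex connected to its 2k nearest neighbors on a cycle, with unit weights), the smallest non-zero Laplacian eigenvalue equals (2k+1) − sin((2k+1)π/n)/sin(π/n). -/

import Mathlib

open scoped Classical

/-- Laplacian matrix of the 2k-regular ring lattice on `ZMod n`. -/
noncomputable def ringLatticeLaplacian (k n : ℕ) [NeZero n] :
    Matrix (ZMod n) (ZMod n) ℝ :=
  fun i j =>
    if i = j then (2 * k : ℝ)
    else if ∃ m : ℕ, 1 ≤ m ∧ m ≤ k ∧ (j = i + (m : ZMod n) ∨ i = j + (m : ZMod n)) then -1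
    else 0

section ANAL
open Real Finset

noncomputable def chebS (v : ℕ) (t : ℝ) : ℝ :=
  ∑ j ∈ Finset.range v, Real.cos ((2*(j:ℝ) + 1 - v) * t)

lemma sin_nat_mul (v : ℕ) (t : ℝ) : Real.sin (v * t) = Real.sin t * chebS v t := by
  set P : ℕ → Prop := fun v => Real.sin (v * t) = Real.sin t * chebS v t with hP
  suffices h : ∀ v : ℕ, P v ∧ P (v+1) from (h v).1
  intro v
  induction v with
  | zero =>
    constructor
    · simp [hP, chebS]
    · simp [hP, chebS]
  | succ v ih =>
    refine ⟨ih.2, ?_⟩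
    have hrec : Real.sin (((v+2 : ℕ) : ℝ) * t)
        = Real.sin ((v : ℝ) * t) + 2 * Real.cos (((v:ℝ)+1) * t) * Real.sin t := by
      have h1 := Real.sin_add (((v:ℝ)+1) * t) t
      have h2 := Real.sin_sub (((v:ℝ)+1) * t) t
      have e1 : ((v+2 : ℕ) : ℝ) * t = ((v:ℝ)+1) * t + t := by push_cast; ring
      have e2 : (v : ℝ) * t = ((v:ℝ)+1) * t - t := by ring
      rw [e1, h1, e2, h2]; ring
    have hS : chebS (v+2) t = chebS v t + 2 * Real.cos (((v:ℝ)+1) * t) := by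
      unfold chebS
      rw [Finset.sum_range_succ, Finset.sum_range_succ']
      have h1 : ∀ x ∈ Finset.range v,
          Real.cos ((2*((x+1 : ℕ):ℝ) + 1 - ((v+2:ℕ):ℝ)) * t) = Real.cos ((2*(x:ℝ) + 1 - v) * t) := by
        intro x _
        congr 1
        push_cast; ring
      rw [Finset.sum_congr rfl h1]
      have h2 : (2*((0 : ℕ):ℝ) + 1 - ((v+2:ℕ):ℝ)) * t = -(((v:ℝ)+1) * t) := by push_cast; ring
      have h3 : (2*((v+1 : ℕ):ℝ) + 1 - ((v+2:ℕ):ℝ)) * t = ((v:ℝ)+1) * t := by push_cast; ring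
      rw [h2, h3, Real.cos_neg]
      ring
    show Real.sin (((v+2 : ℕ):ℝ) * t) = Real.sin t * chebS (v+2) t
    rw [hrec, hS]
    have h4 : Real.sin ((v:ℝ) * t) = Real.sin t * chebS v t := ih.1
    rw [h4]; ring

lemma chebS_anti (v : ℕ) (hv : 1 ≤ v) {t₁ t₂ : ℝ} (h0 : 0 ≤ t₁) (h12 : t₁ ≤ t₂)
    (hvt : v * t₂ ≤ Real.pi) : chebS v t₂ ≤ chebS v t₁ := by
  apply Finset.sum_le_sum
  intro j hj
  have hjv : (j:ℕ) < v := Finset.mem_range.1 hj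
  set c : ℝ := 2*(j:ℝ) + 1 - v with hc
  have habs : |c| ≤ (v:ℝ) - 1 := by
    rw [abs_le]
    constructor
    · have : (0:ℝ) ≤ (j:ℝ) := Nat.cast_nonneg j
      simp only [hc]; linarith
    · have : (j:ℝ) + 1 ≤ v := by exact_mod_cast hjv
      simp only [hc]; linarith
  have ht2 : 0 ≤ t₂ := le_trans h0 h12
  have h1 : ∀ t : ℝ, 0 ≤ t → Real.cos (c * t) = Real.cos (|c| * t) := by
    intro t ht
    rcases abs_cases c with ⟨h, _⟩ | ⟨h, _⟩
    · rw [h]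
    · rw [h, neg_mul, Real.cos_neg]
  rw [h1 t₁ h0, h1 t₂ ht2]
  apply Real.cos_le_cos_of_nonneg_of_le_pi
  · positivity
  · calc |c| * t₂ ≤ ((v:ℝ) - 1) * t₂ := by
          apply mul_le_mul_of_nonneg_right habs ht2
      _ ≤ (v:ℝ) * t₂ := by nlinarith
      _ ≤ Real.pi := hvt
  · apply mul_le_mul_of_nonneg_left h12 (abs_nonneg c)

lemma sin_ratio_anti (v : ℕ) (hv : 1 ≤ v) {t₁ t₂ : ℝ} (h0 : 0 ≤ t₁) (h12 : t₁ ≤ t₂)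
    (hvt : v * t₂ ≤ Real.pi) :
    Real.sin (v * t₂) * Real.sin t₁ ≤ Real.sin (v * t₁) * Real.sin t₂ := by
  have hv1 : (1:ℝ) ≤ v := by exact_mod_cast hv
  have ht2 : 0 ≤ t₂ := le_trans h0 h12
  have ht2pi : t₂ ≤ Real.pi := by nlinarith
  have hs1 : 0 ≤ Real.sin t₁ := Real.sin_nonneg_of_nonneg_of_le_pi h0 (le_trans h12 ht2pi)
  have hs2 : 0 ≤ Real.sin t₂ := Real.sin_nonneg_of_nonneg_of_le_pi ht2 ht2pi
  have hcheb := chebS_anti v hv h0 h12 hvt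
  rw [sin_nat_mul v t₁, sin_nat_mul v t₂]
  nlinarith [mul_nonneg hs1 hs2]

lemma abs_sin_nat_pi_sub (a : ℕ) (t : ℝ) : |Real.sin (a * Real.pi - t)| = |Real.sin t| := by
  have h1 : Real.sin (a * Real.pi - t)
      = Real.sin (a * Real.pi) * Real.cos t - Real.cos (a * Real.pi) * Real.sin t :=
    Real.sin_sub _ _
  rw [Real.sin_nat_mul_pi] at h1
  have h2 : |Real.cos ((a:ℝ) * Real.pi)| = 1 := by
    have h3 := Real.sin_sq_add_cos_sq ((a:ℝ) * Real.pi)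
    rw [Real.sin_nat_mul_pi] at h3
    have h4 : Real.cos ((a:ℝ) * Real.pi) ^ 2 = 1 := by nlinarith
    have h5 : |Real.cos ((a:ℝ) * Real.pi)| ^ 2 = 1 := by rw [sq_abs]; exact h4
    nlinarith [abs_nonneg (Real.cos ((a:ℝ) * Real.pi))]
  rw [h1]
  rw [show (0:ℝ) * Real.cos t - Real.cos ((a:ℝ)*Real.pi) * Real.sin t
      = -(Real.cos ((a:ℝ)*Real.pi) * Real.sin t) by ring]
  rw [abs_neg, abs_mul, h2, one_mul]

lemma lemA_half (n u v : ℕ) (hn : 0 < n) (hu2 : 2*u ≤ n) (hv2 : 2*v ≤ n) :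
    |Real.sin (u * v * Real.pi / n)| * Real.sin (Real.pi / n)
      ≤ Real.sin (u * Real.pi / n) * Real.sin (v * Real.pi / n) := by
  have hnR : (0:ℝ) < n := by exact_mod_cast hn
  have hpi := Real.pi_pos
  rcases Nat.eq_zero_or_pos u with hu0 | hu1
  · subst hu0; simp
  rcases Nat.eq_zero_or_pos v with hv0 | hv1
  · subst hv0; simp
  rcases le_or_gt (u*v) n with huv | huv
  · -- monotonicity case
    have huvR : (u:ℝ) * v ≤ n := by exact_mod_cast huv
    have key := sin_ratio_anti v hv1 (t₁ := Real.pi / n) (t₂ := u * Real.pi / n)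
      (by positivity)
      (by
        rw [div_le_div_iff₀ hnR hnR]
        have : (1:ℝ) ≤ u := by exact_mod_cast hu1
        nlinarith [mul_nonneg (mul_nonneg (sub_nonneg.2 this) Real.pi_pos.le) hnR.le])
      (by
        rw [show (v:ℝ) * ((u:ℝ) * Real.pi / n) = ((u:ℝ)*v) * Real.pi / n by ring]
        rw [div_le_iff₀ hnR]
        nlinarith)
    have habs : |Real.sin (u * v * Real.pi / n)| = Real.sin (u * v * Real.pi / n) := by
      apply abs_of_nonneg
      apply Real.sin_nonneg_of_nonneg_of_le_pi
      · positivity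
      · rw [div_le_iff₀ hnR]; nlinarith
    rw [habs]
    calc Real.sin ((u:ℝ) * v * Real.pi / n) * Real.sin (Real.pi / n)
        = Real.sin ((v:ℕ) * ((u:ℝ) * Real.pi / n)) * Real.sin (Real.pi / n) := by
          congr 2; push_cast; ring
      _ ≤ Real.sin ((v:ℕ) * (Real.pi / n)) * Real.sin ((u:ℝ) * Real.pi / n) := key
      _ = Real.sin ((u:ℝ) * Real.pi / n) * Real.sin ((v:ℝ) * Real.pi / n) := by
          rw [mul_comm]; congr 2; push_cast; ring
  · -- chord bound case
    have hu1R : (1:ℝ) ≤ u := by exact_mod_cast hu1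
    have hv1R : (1:ℝ) ≤ v := by exact_mod_cast hv1
    have huvR : (n:ℝ) + 1 ≤ (u:ℝ) * v := by exact_mod_cast huv
    have h2uR : 2*(u:ℝ) ≤ n := by exact_mod_cast hu2
    have h2vR : 2*(v:ℝ) ≤ n := by exact_mod_cast hv2
    have lhs_le : |Real.sin (u * v * Real.pi / n)| * Real.sin (Real.pi / n) ≤ Real.pi / n := by
      calc |Real.sin (u * v * Real.pi / n)| * Real.sin (Real.pi / n)
          ≤ 1 * Real.sin (Real.pi / n) := by
            apply mul_le_mul_of_nonneg_right (Real.abs_sin_le_one _)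
            apply Real.sin_nonneg_of_nonneg_of_le_pi (by positivity)
            rw [div_le_iff₀ hnR]; nlinarith
        _ = Real.sin (Real.pi / n) := one_mul _
        _ ≤ Real.pi / n := Real.sin_le (by positivity)
    have hub : (u:ℝ) * Real.pi / n ≤ Real.pi / 2 := by
      rw [div_le_div_iff₀ hnR (by norm_num : (0:ℝ) < 2)]
      nlinarith
    have hvb : (v:ℝ) * Real.pi / n ≤ Real.pi / 2 := by
      rw [div_le_div_iff₀ hnR (by norm_num : (0:ℝ) < 2)]
      nlinarith
    have hchord_u : 2 * (u:ℝ) / n ≤ Real.sin ((u:ℝ) * Real.pi / n) := by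
      have := Real.mul_le_sin (x := (u:ℝ) * Real.pi / n) (by positivity) hub
      calc 2 * (u:ℝ) / n = 2 / Real.pi * ((u:ℝ) * Real.pi / n) := by
            field_simp
        _ ≤ _ := this
    have hchord_v : 2 * (v:ℝ) / n ≤ Real.sin ((v:ℝ) * Real.pi / n) := by
      have := Real.mul_le_sin (x := (v:ℝ) * Real.pi / n) (by positivity) hvb
      calc 2 * (v:ℝ) / n = 2 / Real.pi * ((v:ℝ) * Real.pi / n) := by
            field_simp
        _ ≤ _ := this
    have rhs_ge : 4 * ((u:ℝ)*v) / (n*n) ≤ Real.sin (u * Real.pi / n) * Real.sin (v * Real.pi / n) := by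
      calc 4 * ((u:ℝ)*v) / (n*n) = (2*(u:ℝ)/n) * (2*(v:ℝ)/n) := by field_simp; ring
        _ ≤ _ := by
            apply mul_le_mul hchord_u hchord_v (by positivity)
            apply Real.sin_nonneg_of_nonneg_of_le_pi (by positivity)
            linarith [Real.pi_pos, hub, Real.pi_le_four]
    have hmid : Real.pi / n ≤ 4 * ((u:ℝ)*v) / (n*n) := by
      rw [div_le_div_iff₀ hnR (by positivity)]
      have h4 : Real.pi ≤ 4 := Real.pi_le_four
      nlinarith
    linarith

lemma lemA (n u v : ℕ) (hn : 0 < n) (hu : u ≤ n) (hv : v ≤ n) :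
    |Real.sin (u * v * Real.pi / n)| * Real.sin (Real.pi / n)
      ≤ Real.sin (u * Real.pi / n) * Real.sin (v * Real.pi / n) := by
  have hnR : (0:ℝ) < n := by exact_mod_cast hn
  -- reduction lemmas
  have hsin_eq : ∀ w : ℕ, w ≤ n → Real.sin (((n - w : ℕ):ℝ) * Real.pi / n) = Real.sin (w * Real.pi / n) := by
    intro w hw
    rw [Nat.cast_sub hw]
    rw [show ((n:ℝ) - w) * Real.pi / n = Real.pi - (w * Real.pi / n) by field_simp]
    exact Real.sin_pi_sub _
  have habs_eq : ∀ w x : ℕ, w ≤ n →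
      |Real.sin (((n - w : ℕ):ℝ) * x * Real.pi / n)| = |Real.sin ((w:ℝ) * x * Real.pi / n)| := by
    intro w x hw
    rw [Nat.cast_sub hw]
    rw [show ((n:ℝ) - w) * x * Real.pi / n = (x:ℕ) * Real.pi - ((w:ℝ) * x * Real.pi / n) by
      field_simp]
    exact abs_sin_nat_pi_sub x _
  set u' := if 2*u ≤ n then u else n - u with hu'
  set v' := if 2*v ≤ n then v else n - v with hv'
  have hu'2 : 2*u' ≤ n := by
    rw [hu']; split
    · assumption
    · omega
  have hv'2 : 2*v' ≤ n := by
    rw [hv']; split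
    · assumption
    · omega
  have key := lemA_half n u' v' hn hu'2 hv'2
  have e1 : Real.sin ((u':ℝ) * Real.pi / n) = Real.sin ((u:ℝ) * Real.pi / n) := by
    rw [hu']; split
    · rfl
    · exact hsin_eq u hu
  have e2 : Real.sin ((v':ℝ) * Real.pi / n) = Real.sin ((v:ℝ) * Real.pi / n) := by
    rw [hv']; split
    · rfl
    · exact hsin_eq v hv
  have e3 : |Real.sin ((u':ℝ) * v' * Real.pi / n)| = |Real.sin ((u:ℝ) * v * Real.pi / n)| := by
    have step1 : |Real.sin ((u':ℝ) * v' * Real.pi / n)| = |Real.sin ((u:ℝ) * v' * Real.pi / n)| := by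
      rw [hu']; split
      · rfl
      · exact habs_eq u v' hu
    rw [step1]
    have comm1 : (u:ℝ) * v' * Real.pi / n = (v':ℝ) * u * Real.pi / n := by ring
    have comm2 : (u:ℝ) * v * Real.pi / n = (v:ℝ) * u * Real.pi / n := by ring
    rw [comm1, comm2]
    rw [hv']; split
    · rfl
    · exact habs_eq v u hv
  rw [e1, e2, e3] at key
  exact key

lemma dirichlet (k : ℕ) (x : ℝ) :
    Real.sin ((2*(k:ℝ)+1) * x)
      = Real.sin x * (1 + ∑ c ∈ Finset.Icc 1 k, 2 * Real.cos (2*(c:ℝ)*x)) := by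
  induction k with
  | zero => simp
  | succ k ih =>
    rw [Finset.sum_Icc_succ_top (by omega : 1 ≤ k+1)]
    have hrec : Real.sin ((2*((k+1:ℕ):ℝ)+1) * x)
        = Real.sin ((2*(k:ℝ)+1) * x) + 2 * Real.cos (2*((k+1:ℕ):ℝ)*x) * Real.sin x := by
      have h1 := Real.sin_add (2*((k+1:ℕ):ℝ)*x) x
      have h2 := Real.sin_sub (2*((k+1:ℕ):ℝ)*x) x
      have e1 : (2*((k+1:ℕ):ℝ)+1) * x = 2*((k+1:ℕ):ℝ)*x + x := by ring
      have e2 : (2*(k:ℝ)+1) * x = 2*((k+1:ℕ):ℝ)*x - x := by push_cast; ring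
      rw [e1, h1, e2, h2]; ring
    rw [hrec, ih]; push_cast; ring

/-- the eigenvalue function -/
noncomputable def fval (k n v : ℕ) : ℝ :=
  2*(k:ℝ) - ∑ c ∈ Finset.Icc 1 k, 2 * Real.cos (2 * Real.pi * c * v / n)

lemma fval_closed (k n v : ℕ) (hn : 0 < n) (hv0 : 0 < v) (hvn : v < n) :
    fval k n v = (2*(k:ℝ)+1) - Real.sin ((2*(k:ℝ)+1) * (v * Real.pi / n)) / Real.sin (v * Real.pi / n) := by
  have hnR : (0:ℝ) < n := by exact_mod_cast hn
  have hvR : (0:ℝ) < v := by exact_mod_cast hv0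
  have hvnR : (v:ℝ) < n := by exact_mod_cast hvn
  have hsin : 0 < Real.sin ((v:ℝ) * Real.pi / n) := by
    apply Real.sin_pos_of_pos_of_lt_pi
    · positivity
    · rw [div_lt_iff₀ hnR]; nlinarith [Real.pi_pos]
  have hd := dirichlet k ((v:ℝ) * Real.pi / n)
  have hsum : ∑ c ∈ Finset.Icc 1 k, 2 * Real.cos (2 * Real.pi * c * v / n)
      = ∑ c ∈ Finset.Icc 1 k, 2 * Real.cos (2*(c:ℝ)*((v:ℝ) * Real.pi / n)) := by
    apply Finset.sum_congr rfl
    intro c _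
    congr 2
    field_simp
  unfold fval
  rw [hsum]
  have h2 : 1 + ∑ c ∈ Finset.Icc 1 k, 2 * Real.cos (2*(c:ℝ)*((v:ℝ) * Real.pi / n))
      = Real.sin ((2*(k:ℝ)+1) * ((v:ℝ) * Real.pi / n)) / Real.sin ((v:ℝ) * Real.pi / n) := by
    rw [hd]
    rw [mul_div_cancel_left₀ _ hsin.ne']
  have h3 : ∑ c ∈ Finset.Icc 1 k, 2 * Real.cos (2*(c:ℝ)*((v:ℝ) * Real.pi / n))
      = Real.sin ((2*(k:ℝ)+1) * ((v:ℝ) * Real.pi / n)) / Real.sin ((v:ℝ) * Real.pi / n) - 1 := by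
    linarith
  rw [h3]; ring

lemma fval_zero (k n : ℕ) : fval k n 0 = 0 := by
  unfold fval
  have : ∀ c ∈ Finset.Icc 1 k, 2 * Real.cos (2 * Real.pi * c * (0:ℕ) / n) = 2 := by
    intro c _; norm_num
  rw [Finset.sum_congr rfl this, Finset.sum_const, Nat.card_Icc]
  simp
  ring

lemma fval_pos (k n v : ℕ) (hk : 0 < k) (hn : 0 < n) (hv0 : 0 < v) (hvn : v < n) :
    0 < fval k n v := by
  have hnR : (0:ℝ) < n := by exact_mod_cast hn
  have hvR : (0:ℝ) < v := by exact_mod_cast hv0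
  have hvnR : (v:ℝ) < n := by exact_mod_cast hvn
  have hrw : fval k n v = ∑ c ∈ Finset.Icc 1 k, (2 - 2 * Real.cos (2 * Real.pi * c * v / n)) := by
    unfold fval
    rw [Finset.sum_sub_distrib, Finset.sum_const, Nat.card_Icc]
    have hcard : k + 1 - 1 = k := by omega
    rw [hcard, nsmul_eq_mul]
    ring
  rw [hrw]
  have h1 : ∀ c ∈ Finset.Icc 1 k, 0 ≤ 2 - 2 * Real.cos (2 * Real.pi * c * v / n) := by
    intro c _
    nlinarith [Real.cos_le_one (2 * Real.pi * c * v / n)]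
  have hmem : 1 ∈ Finset.Icc 1 k := by
    rw [Finset.mem_Icc]; omega
  have h2 : 0 < 2 - 2 * Real.cos (2 * Real.pi * ((1:ℕ):ℝ) * v / n) := by
    have hcos : Real.cos (2 * Real.pi * ((1:ℕ):ℝ) * v / n) < 1 := by
      have harg : 2 * Real.pi * ((1:ℕ):ℝ) * v / n = 2 * ((v:ℝ) * Real.pi / n) := by push_cast; ring
      rw [harg, Real.cos_two_mul']
      have hs : 0 < Real.sin ((v:ℝ) * Real.pi / n) := by
        apply Real.sin_pos_of_pos_of_lt_pi
        · positivity
        · rw [div_lt_iff₀ hnR]; nlinarith [Real.pi_pos]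
      nlinarith [Real.cos_sq_le_one ((v:ℝ) * Real.pi / n), Real.sin_sq_add_cos_sq ((v:ℝ) * Real.pi / n)]
    linarith
  exact lt_of_lt_of_le h2 (Finset.single_le_sum h1 hmem)

lemma fval_ge (k n v : ℕ) (hn : 2*k+1 ≤ n) (hv0 : 0 < v) (hvn : v < n) :
    fval k n 1 ≤ fval k n v := by
  have hn0 : 0 < n := by omega
  have hnR : (0:ℝ) < n := by exact_mod_cast hn0
  have hvR : (0:ℝ) < v := by exact_mod_cast hv0
  have hvnR : (v:ℝ) < n := by exact_mod_cast hvn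
  have hNn : (2*(k:ℝ)+1) ≤ n := by exact_mod_cast hn
  have hsv : 0 < Real.sin ((v:ℝ) * Real.pi / n) := by
    apply Real.sin_pos_of_pos_of_lt_pi
    · positivity
    · rw [div_lt_iff₀ hnR]; nlinarith [Real.pi_pos]
  have hn2R : (2:ℝ) ≤ n := by exact_mod_cast (by omega : 2 ≤ n)
  have hs1 : 0 < Real.sin (Real.pi / n) := by
    apply Real.sin_pos_of_pos_of_lt_pi
    · positivity
    · rw [div_lt_iff₀ hnR]; nlinarith [Real.pi_pos]
  rw [fval_closed k n v hn0 hv0 hvn, fval_closed k n 1 hn0 one_pos (by omega)]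
  have key := lemA n v (2*k+1) hn0 (le_of_lt hvn) hn
  -- key : |sin (v * (2k+1) * π / n)| * sin (π/n) ≤ sin (v π/n) * sin ((2k+1) π/n)
  have hdiv : Real.sin ((2*(k:ℝ)+1) * ((v:ℝ) * Real.pi / n)) / Real.sin ((v:ℝ) * Real.pi / n)
      ≤ Real.sin ((2*(k:ℝ)+1) * ((1:ℕ) * Real.pi / n)) / Real.sin (((1:ℕ):ℝ) * Real.pi / n) := by
    push_cast
    rw [one_mul, div_le_div_iff₀ hsv hs1]
    calc Real.sin ((2*(k:ℝ)+1) * ((v:ℝ) * Real.pi / n)) * Real.sin (Real.pi / n)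
        ≤ |Real.sin ((v:ℝ) * ((2*(k:ℕ)+1):ℕ) * Real.pi / n)| * Real.sin (Real.pi / n) := by
          apply mul_le_mul_of_nonneg_right _ hs1.le
          rw [show (v:ℝ) * (((2*(k:ℕ)+1):ℕ):ℝ) * Real.pi / n = (2*(k:ℝ)+1) * ((v:ℝ) * Real.pi / n) by push_cast; ring]
          exact le_abs_self _
      _ ≤ Real.sin ((v:ℝ) * Real.pi / n) * Real.sin ((((2*(k:ℕ)+1):ℕ):ℝ) * Real.pi / n) := key
      _ = Real.sin ((2*(k:ℝ)+1) * (Real.pi / n)) * Real.sin ((v:ℝ) * Real.pi / n) := by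
          rw [mul_comm]
          congr 2
          push_cast; ring
  push_cast at hdiv ⊢
  linarith

end ANAL



namespace RLL

open Matrix Complex Finset

noncomputable def Lc (k n : ℕ) [NeZero n] : Matrix (ZMod n) (ZMod n) ℂ :=
  (ringLatticeLaplacian k n).map Complex.ofReal

lemma rll_symm (k n : ℕ) [NeZero n] (i j : ZMod n) :
    ringLatticeLaplacian k n i j = ringLatticeLaplacian k n j i := by
  unfold ringLatticeLaplacian
  by_cases h : i = j
  · subst h; rfl
  · rw [if_neg h, if_neg (Ne.symm h)]
    refine if_congr ?_ rfl rfl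
    constructor
    · rintro ⟨m, h1, h2, h3⟩; exact ⟨m, h1, h2, h3.symm⟩
    · rintro ⟨m, h1, h2, h3⟩; exact ⟨m, h1, h2, h3.symm⟩

variable {k n : ℕ} [NeZero n]

lemma key_sum (hn : 2*k+1 ≤ n) (ζ : ℂ) (hζ : ζ^n = 1) (i : ZMod n) :
    ∑ j : ZMod n, (Lc k n) i j * ζ^(j.val)
      = ((2*(k:ℂ)) - ∑ c ∈ Finset.Icc 1 k, (ζ^c + ζ^(n-c))) * ζ^(i.val) := by
  have hn0 : 0 < n := by omega
  have hzmod_pow : ∀ t : ℕ, ζ^(t % n) = ζ^t := by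
    intro t
    conv_rhs => rw [← Nat.div_add_mod t n, pow_add, pow_mul, hζ, one_pow, one_mul]
  have hz_add : ∀ a b : ZMod n, ζ^((a+b).val) = ζ^(a.val) * ζ^(b.val) := by
    intro a b; rw [ZMod.val_add, hzmod_pow, pow_add]
  have hcast_val : ∀ c : ℕ, c ≤ k → ((c : ℕ) : ZMod n).val = c := by
    intro c hc; exact ZMod.val_cast_of_lt (by omega)
  have hcast_ne : ∀ c : ℕ, 1 ≤ c → c ≤ k → ((c : ℕ) : ZMod n) ≠ 0 := by
    intro c h1 h2 h0
    have := hcast_val c h2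
    rw [h0, ZMod.val_zero] at this
    omega
  have hadd_val : ∀ c : ℕ, 1 ≤ c → c ≤ k → ζ^((i + (c:ZMod n)).val) = ζ^(i.val) * ζ^c := by
    intro c h1 h2
    rw [hz_add, hcast_val c h2]
  have hsub_val : ∀ c : ℕ, 1 ≤ c → c ≤ k → ζ^((i - (c:ZMod n)).val) = ζ^(i.val) * ζ^(n - c) := by
    intro c h1 h2
    rw [sub_eq_add_neg, hz_add]
    congr 2
    rw [ZMod.neg_val, if_neg (hcast_ne c h1 h2), hcast_val c h2]
  set P : ZMod n → Prop :=
    fun j => ∃ m : ℕ, 1 ≤ m ∧ m ≤ k ∧ (j = i + (m : ZMod n) ∨ i = j + (m : ZMod n)) with hP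
  have hPii : ¬ P i := by
    rintro ⟨m, h1, h2, h3 | h3⟩ <;>
    · have hm0 : (m : ZMod n) = 0 := by
        have := h3
        rwa [left_eq_add] at this
      have := hcast_val m h2
      rw [hm0, ZMod.val_zero] at this
      omega
  have hentry : ∀ j, (Lc k n) i j = if i = j then (2*(k:ℂ)) else if P j then -1 else 0 := by
    intro j
    show Complex.ofReal (ringLatticeLaplacian k n i j) = _
    unfold ringLatticeLaplacian
    simp only [Matrix.map_apply, apply_ite Complex.ofReal, Complex.ofReal_neg,
      Complex.ofReal_zero, Complex.ofReal_mul, Complex.ofReal_ofNat, Complex.ofReal_natCast,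
      Complex.ofReal_one, hP]
  have hsplit : ∀ j, (Lc k n) i j * ζ^(j.val)
      = (if i = j then (2*(k:ℂ)) * ζ^(j.val) else 0) + (if P j then -(ζ^(j.val)) else 0) := by
    intro j
    rw [hentry j]
    by_cases h1 : i = j
    · subst h1
      rw [if_pos rfl, if_pos rfl, if_neg hPii]; ring
    · rw [if_neg h1, if_neg h1]
      by_cases h2 : P j
      · rw [if_pos h2, if_pos h2]; ring
      · rw [if_neg h2, if_neg h2]; ring
  rw [Finset.sum_congr rfl (fun j _ => hsplit j), Finset.sum_add_distrib]
  rw [Finset.sum_ite_eq Finset.univ i (fun j => (2*(k:ℂ)) * ζ^(j.val)), if_pos (Finset.mem_univ i)]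
  have hfilter : Finset.univ.filter P
      = ((Finset.Icc 1 k).image (fun c : ℕ => i + (c : ZMod n)))
        ∪ ((Finset.Icc 1 k).image (fun c : ℕ => i - (c : ZMod n))) := by
    ext j
    simp only [Finset.mem_filter, Finset.mem_univ, true_and, Finset.mem_union,
      Finset.mem_image, Finset.mem_Icc, hP]
    constructor
    · rintro ⟨m, h1, h2, h3 | h3⟩
      · exact Or.inl ⟨m, ⟨h1, h2⟩, h3.symm⟩
      · refine Or.inr ⟨m, ⟨h1, h2⟩, ?_⟩
        rw [h3]; ring
    · rintro (⟨c, ⟨h1, h2⟩, rfl⟩ | ⟨c, ⟨h1, h2⟩, rfl⟩)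
      · exact ⟨c, h1, h2, Or.inl rfl⟩
      · exact ⟨c, h1, h2, Or.inr (by ring)⟩
  have hsum2 : ∑ j : ZMod n, (if P j then -(ζ^(j.val)) else 0)
      = -∑ j ∈ Finset.univ.filter P, ζ^(j.val) := by
    rw [← Finset.sum_filter]
    rw [Finset.sum_neg_distrib]
  have hdisj : Disjoint ((Finset.Icc 1 k).image (fun c : ℕ => i + (c : ZMod n)))
      ((Finset.Icc 1 k).image (fun c : ℕ => i - (c : ZMod n))) := by
    rw [Finset.disjoint_left]
    rintro a ha1 ha2
    obtain ⟨c, hc, rfl⟩ := Finset.mem_image.1 ha1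
    obtain ⟨c', hc', heq⟩ := Finset.mem_image.1 ha2
    rw [Finset.mem_Icc] at hc hc'
    have h0 : i + ((c : ZMod n) + (c' : ZMod n)) = i + 0 := by
      rw [← add_assoc, add_zero, ← heq]
      ring
    have h1 : ((c + c' : ℕ) : ZMod n) = 0 := by
      push_cast
      exact add_left_cancel h0
    have h2 : n ∣ c + c' := (ZMod.natCast_eq_zero_iff _ _).1 h1
    rcases h2 with ⟨t, ht⟩
    rcases Nat.eq_zero_or_pos t with rfl | htpos
    · omega
    · have : n ≤ c + c' := by
        calc n = n * 1 := by ring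
          _ ≤ n * t := Nat.mul_le_mul_left n htpos
          _ = c + c' := ht.symm
      omega
  have hinj1 : ∀ x ∈ Finset.Icc 1 k, ∀ y ∈ Finset.Icc 1 k,
      i + (x : ZMod n) = i + (y : ZMod n) → x = y := by
    intro x hx y hy hxy
    rw [Finset.mem_Icc] at hx hy
    have : (x : ZMod n) = y := add_left_cancel hxy
    have h1 := hcast_val x hx.2
    have h2 := hcast_val y hy.2
    rw [this] at h1
    omega
  have hinj2 : ∀ x ∈ Finset.Icc 1 k, ∀ y ∈ Finset.Icc 1 k,
      i - (x : ZMod n) = i - (y : ZMod n) → x = y := by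
    intro x hx y hy hxy
    rw [Finset.mem_Icc] at hx hy
    have : (x : ZMod n) = y := by
      rwa [sub_right_inj] at hxy
    have h1 := hcast_val x hx.2
    have h2 := hcast_val y hy.2
    rw [this] at h1
    omega
  rw [hsum2, hfilter, Finset.sum_union hdisj, Finset.sum_image hinj1, Finset.sum_image hinj2]
  rw [Finset.sum_congr rfl (fun c hc => hadd_val c (Finset.mem_Icc.1 hc).1 (Finset.mem_Icc.1 hc).2),
      Finset.sum_congr rfl (fun c hc => hsub_val c (Finset.mem_Icc.1 hc).1 (Finset.mem_Icc.1 hc).2)]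
  rw [← Finset.sum_add_distrib]
  have hlast : ∑ x ∈ Finset.Icc 1 k, (ζ^(i.val) * ζ^x + ζ^(i.val) * ζ^(n-x))
      = (∑ c ∈ Finset.Icc 1 k, (ζ^c + ζ^(n-c))) * ζ^(i.val) := by
    rw [Finset.sum_mul]
    exact Finset.sum_congr rfl (fun c _ => by ring)
  rw [hlast]
  ring


section Omega
variable (k n : ℕ) [NeZero n]

noncomputable def om (n : ℕ) : ℂ := Complex.exp (2 * Real.pi * Complex.I / n)

lemma om_pow_n : (om n) ^ n = 1 := by
  have hn0 : (n:ℂ) ≠ 0 := by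
    exact_mod_cast Nat.cast_ne_zero.2 (NeZero.ne n)
  rw [om, ← Complex.exp_nat_mul]
  rw [show (n:ℂ) * (2 * Real.pi * Complex.I / n) = 2 * Real.pi * Complex.I by field_simp]
  exact Complex.exp_two_pi_mul_I

lemma om_pow (s : ℕ) : (om n) ^ s = Complex.exp (s * (2 * Real.pi * Complex.I / n)) := by
  rw [om, ← Complex.exp_nat_mul]

noncomputable def colv (n : ℕ) [NeZero n] (m : ZMod n) : ZMod n → ℂ :=
  fun j => ((om n) ^ m.val) ^ j.val

lemma colv_ne_zero (m : ZMod n) : colv n m ≠ 0 := by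
  intro h
  have h0 := congrFun h (0 : ZMod n)
  simp only [colv, ZMod.val_zero, pow_zero, Pi.zero_apply] at h0
  exact one_ne_zero h0

lemma gval_eq_fval (hn : 2*k+1 ≤ n) (m : ZMod n) :
    (2*(k:ℂ)) - ∑ c ∈ Finset.Icc 1 k, (((om n)^m.val)^c + ((om n)^m.val)^(n-c))
      = ((fval k n m.val : ℝ) : ℂ) := by
  have hn0 : (n:ℂ) ≠ 0 := by exact_mod_cast Nat.cast_ne_zero.2 (NeZero.ne n)
  have hterm : ∀ c ∈ Finset.Icc 1 k,
      ((om n)^m.val)^c + ((om n)^m.val)^(n-c)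
        = ((2 * Real.cos (2 * Real.pi * c * m.val / n) : ℝ) : ℂ) := by
    intro c hc
    rw [Finset.mem_Icc] at hc
    have hcn : c ≤ n := by omega
    set θ : ℝ := 2 * Real.pi * c * m.val / n with hθ
    have h1 : ((om n)^m.val)^c = Complex.exp ((θ:ℂ) * Complex.I) := by
      rw [← pow_mul, om_pow]
      congr 1
      rw [hθ]
      push_cast
      field_simp
    have h2 : ((om n)^m.val)^(n-c) = Complex.exp ((-(θ:ℂ)) * Complex.I) := by
      rw [← pow_mul, om_pow]
      have harg : ((m.val*(n-c) : ℕ):ℂ) * (2 * Real.pi * Complex.I / n)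
          = (m.val : ℂ) * (2 * Real.pi * Complex.I) + (-(θ:ℂ)) * Complex.I := by
        rw [Nat.cast_mul, Nat.cast_sub hcn, hθ]
        push_cast
        field_simp
        ring
      rw [harg, Complex.exp_add]
      have hone : Complex.exp ((m.val : ℂ) * (2 * Real.pi * Complex.I)) = 1 := by
        rw [Complex.exp_nat_mul, Complex.exp_two_pi_mul_I, one_pow]
      rw [hone, one_mul]
    rw [h1, h2]
    have h3 : ((2 * Real.cos θ : ℝ) : ℂ) = 2 * Complex.cos (θ:ℂ) := by
      push_cast [Complex.ofReal_cos]
      ring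
    rw [h3, Complex.two_cos]
  rw [Finset.sum_congr rfl hterm]
  unfold fval
  push_cast
  ring

end Omega

noncomputable def Vm (n : ℕ) [NeZero n] : Matrix (ZMod n) (ZMod n) ℂ :=
  fun j m => ((om n) ^ m.val) ^ j.val

lemma det_Vm_ne_zero (n : ℕ) [NeZero n] : (Vm n).det ≠ 0 := by
  have hprim : IsPrimitiveRoot (om n) n := Complex.isPrimitiveRoot_exp n (NeZero.ne n)
  let e : Fin n ≃ ZMod n :=
    { toFun := fun a => ((a : ℕ) : ZMod n)
      invFun := fun x => ⟨x.val, ZMod.val_lt x⟩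
      left_inv := fun a => by
        apply Fin.ext
        simp [ZMod.val_cast_of_lt a.isLt]
      right_inv := fun x => by
        simp [ZMod.natCast_rightInverse x] }
  have hdet : ((Vm n).submatrix e e).det = (Vm n).det := Matrix.det_submatrix_equiv_self e (Vm n)
  have hsub : (Vm n).submatrix e e = (Matrix.vandermonde (fun b : Fin n => (om n)^(b:ℕ)))ᵀ := by
    ext a b
    simp only [Matrix.submatrix_apply, Matrix.transpose_apply, Matrix.vandermonde]
    show ((om n) ^ (((b : ℕ) : ZMod n)).val) ^ (((a : ℕ) : ZMod n)).val = _
    rw [ZMod.val_cast_of_lt a.isLt, ZMod.val_cast_of_lt b.isLt]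
    rfl
  rw [← hdet, hsub, Matrix.det_transpose, Matrix.det_vandermonde]
  rw [Finset.prod_ne_zero_iff]
  intro a _
  rw [Finset.prod_ne_zero_iff]
  intro b hb
  rw [Finset.mem_Ioi] at hb
  apply sub_ne_zero_of_ne
  intro hEq
  have := hprim.pow_inj b.isLt a.isLt hEq
  omega

section Spec

variable (k n : ℕ) [NeZero n]

lemma spectrum_iff_detC (μ : ℝ) :
    μ ∈ spectrum ℝ (ringLatticeLaplacian k n) ↔
      ((μ:ℂ) • (1 : Matrix (ZMod n) (ZMod n) ℂ) - Lc k n).det = 0 := by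
  rw [spectrum.mem_iff, Matrix.isUnit_iff_isUnit_det, isUnit_iff_ne_zero, not_ne_iff]
  have hdet : (Complex.ofRealHom) ((algebraMap ℝ (Matrix (ZMod n) (ZMod n) ℝ) μ
      - ringLatticeLaplacian k n).det)
      = ((μ:ℂ) • (1 : Matrix (ZMod n) (ZMod n) ℂ) - Lc k n).det := by
    rw [RingHom.map_det]
    congr 1
    ext i j
    simp only [RingHom.mapMatrix_apply, Matrix.map_apply, Matrix.sub_apply,
      Matrix.algebraMap_matrix_apply, Matrix.smul_apply, Matrix.one_apply, Lc,
      apply_ite Complex.ofRealHom, smul_eq_mul]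
    by_cases h : i = j <;> simp [h, Complex.ofRealHom_eq_coe]
  constructor
  · intro h
    rw [← hdet, h]
    simp
  · intro h
    have : (Complex.ofRealHom) ((algebraMap ℝ (Matrix (ZMod n) (ZMod n) ℝ) μ
        - ringLatticeLaplacian k n).det) = 0 := by rw [hdet, h]
    rwa [Complex.ofRealHom_eq_coe, Complex.ofReal_eq_zero] at this

lemma mulVec_col (hn : 2*k+1 ≤ n) (m : ZMod n) :
    (Lc k n).mulVec (colv n m) = ((fval k n m.val : ℝ):ℂ) • colv n m := by
  ext i
  have hζ : ((om n)^m.val)^n = 1 := by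
    rw [← pow_mul, mul_comm, pow_mul, om_pow_n, one_pow]
  have hk := key_sum hn ((om n)^m.val) hζ i
  show dotProduct (Lc k n i) (colv n m) = _
  rw [dotProduct]
  simp only [colv]
  rw [hk, gval_eq_fval k n hn m]
  simp [colv, smul_eq_mul, mul_comm]

lemma fval_mem_spectrum (hn : 2*k+1 ≤ n) (m : ZMod n) :
    fval k n m.val ∈ spectrum ℝ (ringLatticeLaplacian k n) := by
  rw [spectrum_iff_detC]
  apply (Matrix.exists_mulVec_eq_zero_iff).1
  refine ⟨colv n m, colv_ne_zero n m, ?_⟩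
  rw [Matrix.sub_mulVec, Matrix.smul_mulVec, Matrix.one_mulVec, mulVec_col k n hn m]
  simp

lemma spectrum_subset (hn : 2*k+1 ≤ n) (μ : ℝ) (hμ : μ ∈ spectrum ℝ (ringLatticeLaplacian k n)) :
    ∃ m : ZMod n, μ = fval k n m.val := by
  by_contra hcon
  push_neg at hcon
  rw [spectrum_iff_detC] at hμ
  obtain ⟨w, hw0, hw⟩ := (Matrix.exists_mulVec_eq_zero_iff).2 hμ
  set M := (μ:ℂ) • (1 : Matrix (ZMod n) (ZMod n) ℂ) - Lc k n with hM
  have hMsymm : Mᵀ = M := by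
    rw [hM, Matrix.transpose_sub, Matrix.transpose_smul, Matrix.transpose_one]
    congr 1
    ext i j
    show (Lc k n) j i = (Lc k n) i j
    simp only [Lc, Matrix.map_apply]
    rw [rll_symm k n j i]
  have hcol : ∀ m : ZMod n, dotProduct (colv n m) w = 0 := by
    intro m
    have h1 : dotProduct (colv n m) (M.mulVec w) = 0 := by
      rw [hw, dotProduct_zero]
    rw [Matrix.dotProduct_mulVec, ← Matrix.mulVec_transpose, hMsymm] at h1
    have h2 : M.mulVec (colv n m) = ((μ:ℂ) - ((fval k n m.val : ℝ):ℂ)) • colv n m := by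
      rw [hM, Matrix.sub_mulVec, Matrix.smul_mulVec, Matrix.one_mulVec,
        mulVec_col k n hn m, sub_smul]
    rw [h2, smul_dotProduct] at h1
    have hfne : ((μ:ℂ) - ((fval k n m.val : ℝ):ℂ)) ≠ 0 := by
      rw [sub_ne_zero]
      intro h
      exact hcon m (by exact_mod_cast h)
    rcases smul_eq_zero.1 h1 with h | h
    · exact absurd h hfne
    · exact h
  have hvm : Matrix.vecMul w (Vm n) = 0 := by
    ext m
    show ∑ j, w j * (Vm n) j m = 0
    have := hcol m
    rw [dotProduct] at this
    rw [← this]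
    apply Finset.sum_congr rfl
    intro j _
    rw [mul_comm]
    rfl
  have hunit : IsUnit (Vm n).det := isUnit_iff_ne_zero.2 (det_Vm_ne_zero n)
  have hwzero : w = 0 := by
    have h3 := congrArg (fun u => Matrix.vecMul u (Vm n)⁻¹) hvm
    rw [Matrix.vecMul_vecMul, Matrix.mul_nonsing_inv _ hunit, Matrix.vecMul_one] at h3
    rw [h3]
    exact Matrix.zero_vecMul _
  exact hw0 hwzero

end Spec

end RLL

theorem ringLattice_lambda2 (k n : ℕ) [NeZero n] (hk : 0 < k) (hn : 2 * k + 1 ≤ n) :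
    IsLeast {μ : ℝ | μ ≠ 0 ∧ μ ∈ spectrum ℝ (ringLatticeLaplacian k n)}
      ((2 * k + 1 : ℝ) -
        Real.sin ((2 * k + 1) * Real.pi / n) / Real.sin (Real.pi / n)) := by
  have hn0 : 0 < n := by omega
  have hn1 : 1 < n := by omega
  haveI : Fact (1 < n) := ⟨hn1⟩
  have hval1 : (1 : ZMod n).val = 1 := ZMod.val_one n
  have htarget : fval k n 1
      = (2 * k + 1 : ℝ) - Real.sin ((2 * k + 1) * Real.pi / n) / Real.sin (Real.pi / n) := by
    rw [fval_closed k n 1 hn0 one_pos hn1]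
    rw [show ((1:ℕ):ℝ) * Real.pi / n = Real.pi / n by push_cast; ring]
    rw [show (2*(k:ℝ)+1) * (Real.pi / n) = (2*(k:ℝ)+1) * Real.pi / n by ring]
  constructor
  · constructor
    · rw [← htarget]
      exact ne_of_gt (fval_pos k n 1 hk hn0 one_pos hn1)
    · rw [← htarget]
      have hmem := RLL.fval_mem_spectrum k n hn (1 : ZMod n)
      rwa [hval1] at hmem
  · rintro μ ⟨hμ0, hμs⟩
    obtain ⟨m, rfl⟩ := RLL.spectrum_subset k n hn μ hμs
    rw [← htarget]
    have hm0 : m.val ≠ 0 := by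
      intro h
      exact hμ0 (by rw [h, fval_zero])
    exact fval_ge k n m.val hn (Nat.pos_of_ne_zero hm0) (ZMod.val_lt m)
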